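/- arXiv:math/0212145 — 4 statements merged into one kernel-verified Lean document; each statement's English description precedes it below -/
import Mathlib

section
/- Let R be a commutative ring, B a commutative R-algebra, I an ideal of B, A := B/I with quotient map φ : B → A, M an A-module, and ν : I/I² → M an A-linear map. Then there exist a square-zero extension (E, π, ι) of A by M and an R-algebra homomorphism λ : B → E such that π ∘ λ = φ and λ(x) = ι(ν(x + I²)) for every x ∈ I. -/
universe u v w

/-- A square-zero extension of a commutative `R`-algebra `A` by an `A`-module `M`:
a commutative `R`-algebra `E` with a surjective `R`-algebra homomorphism `π : E → A`
whose kernel `K` satisfies `K·K = 0` (so that `K` is an `A`-module via `a • k := e * k`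
for any `e` with `π e = a`), together with an `A`-module isomorphism `ι : M ≃ K`
(encoded as an additive isomorphism satisfying the `A`-linearity condition `ι_linear`). -/
structure SquareZeroExtension (R : Type u) (A : Type v) (M : Type w)
    [CommRing R] [CommRing A] [Algebra R A] [AddCommGroup M] [Module A M] where
  /-- The underlying algebra of the extension. -/
  E : Type (max u v w)
  [commRing : CommRing E]
  [algebra : Algebra R E]
  /-- The projection onto `A`. -/
  π : E →ₐ[R] A
  surjective : Function.Surjective π
  squareZero : ∀ x ∈ RingHom.ker π, ∀ y ∈ RingHom.ker π, x * y = 0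
  /-- The identification of `M` with the kernel of `π`. -/
  ι : M ≃+ RingHom.ker π
  ι_linear : ∀ (a : A) (m : M) (e : E), π e = a → ((ι (a • m) : E) = e * (ι m : E))

attribute [instance] SquareZeroExtension.commRing SquareZeroExtension.algebra

set_option maxHeartbeats 1000000

/-- **Essential surjectivity in Proposition 2 (ext1prop)** of "Equivariant deformations of
singular curves with group scheme action": for a commutative ring `R`, a commutative
`R`-algebra `B`, an ideal `I ≤ B`, `A := B/I`, an `A`-module `M` and an `A`-linear map
`ν : I/I² → M`, there exist a square-zero extension `(E, π, ι)` of `A` by `M` and an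
`R`-algebra homomorphism `λ : B → E` with `π ∘ λ = φ` (the quotient map) and
`λ(x) = ι(ν(x + I²))` for every `x ∈ I`. -/
theorem exists_squareZeroExtension_of_cotangent_hom
    (R : Type u) (B : Type v) [CommRing R] [CommRing B] [Algebra R B]
    (I : Ideal B) (M : Type w) [AddCommGroup M] [Module (B ⧸ I) M]
    (ν : I.Cotangent →ₗ[B ⧸ I] M) :
    ∃ (S : SquareZeroExtension R (B ⧸ I) M) (l : B →ₐ[R] S.E),
      S.π.comp l = Ideal.Quotient.mkₐ R I ∧
      ∀ x : I, (S.ι (ν (I.toCotangent x)) : S.E) = l x := by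
  classical
  letI : Module B M := Module.compHom M (Ideal.Quotient.mk I : B →+* B ⧸ I)
  letI : Module Bᵐᵒᵖ M :=
    Module.compHom M ((Ideal.Quotient.mk I : B →+* B ⧸ I).fromOpposite fun a b => Commute.all _ _)
  haveI : IsCentralScalar B M := ⟨fun b m => rfl⟩
  haveI : SMulCommClass B Bᵐᵒᵖ M := ⟨fun b b' m => by
    show Ideal.Quotient.mk I b • Ideal.Quotient.mk I b'.unop • m
       = Ideal.Quotient.mk I b'.unop • Ideal.Quotient.mk I b • m
    rw [smul_comm]⟩
  letI : Module R M := Module.compHom M (algebraMap R (B ⧸ I))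
  haveI : IsScalarTower R B M := ⟨fun r b m => by
    show Ideal.Quotient.mk I (r • b) • m = algebraMap R (B ⧸ I) r • Ideal.Quotient.mk I b • m
    rw [Algebra.smul_def, map_mul, mul_smul]
    congr 1⟩
  haveI : IsScalarTower R Bᵐᵒᵖ M := ⟨fun r b m => by
    show Ideal.Quotient.mk I (r • b).unop • m
       = algebraMap R (B ⧸ I) r • Ideal.Quotient.mk I b.unop • m
    rw [MulOpposite.unop_smul, Algebra.smul_def, map_mul, mul_smul]
    congr 1⟩
  have hbm : ∀ (b : B) (m : M), b • m = Ideal.Quotient.mk I b • m := fun _ _ => rfl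
  have hIm : ∀ b ∈ I, ∀ m : M, b • m = 0 := fun b hb m => by
    rw [hbm, Ideal.Quotient.eq_zero_iff_mem.mpr hb, zero_smul]
  have hν : ∀ (b : B) (x : I), b • ν (I.toCotangent x) = ν (I.toCotangent (b • x)) := by
    intro b x
    rw [hbm, ← map_smul]
    rfl
  -- the ideal `K = {(x, -ν x̄) : x ∈ I}` in the trivial square-zero extension `B ⋉ M`
  let k : I → TrivSqZeroExt B M := fun x =>
    TrivSqZeroExt.inl (x : B) - TrivSqZeroExt.inr (ν (I.toCotangent x))
  have hk_fst : ∀ x : I, (k x).fst = (x : B) := fun x => by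
    simp [k, TrivSqZeroExt.fst_sub]
  have hk_snd : ∀ x : I, (k x).snd = -ν (I.toCotangent x) := fun x => by
    simp [k, TrivSqZeroExt.snd_sub]
  let K : Ideal (TrivSqZeroExt B M) :=
    { carrier := Set.range k
      zero_mem' := ⟨0, by
        apply TrivSqZeroExt.ext
        · simp [hk_fst]
        · simp [hk_snd]⟩
      add_mem' := by
        rintro p q ⟨x, rfl⟩ ⟨y, rfl⟩
        refine ⟨x + y, ?_⟩
        apply TrivSqZeroExt.ext
        · simp [hk_fst]
        · simp [hk_snd, neg_add]
          abel
      smul_mem' := by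
        rintro c p ⟨x, rfl⟩
        refine ⟨c.fst • x, ?_⟩
        show k (c.fst • x) = c * k x
        apply TrivSqZeroExt.ext
        · rw [hk_fst, TrivSqZeroExt.fst_mul, hk_fst, SetLike.val_smul, smul_eq_mul]
        · rw [hk_snd, TrivSqZeroExt.snd_mul, hk_snd, hk_fst, op_smul_eq_smul,
            hIm _ x.2, add_zero, smul_neg, hν] }
  have hKmem : ∀ p : TrivSqZeroExt B M, p ∈ K ↔ ∃ x : I, k x = p := fun p => Iff.rfl
  let Q := TrivSqZeroExt B M ⧸ K
  let π0 : TrivSqZeroExt B M →ₐ[R] B ⧸ I :=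
    (Ideal.Quotient.mkₐ R I).comp (TrivSqZeroExt.fstHom R B M)
  have hπ0 : ∀ p : TrivSqZeroExt B M, π0 p = Ideal.Quotient.mk I p.fst := fun _ => rfl
  have hK0 : ∀ a ∈ K, π0 a = 0 := by
    rintro _ ⟨x, rfl⟩
    rw [hπ0, hk_fst, Ideal.Quotient.eq_zero_iff_mem]
    exact x.2
  let π1 : Q →ₐ[R] B ⧸ I := Ideal.Quotient.liftₐ K π0 hK0
  have hπ1 : ∀ p : TrivSqZeroExt B M,
      π1 (Ideal.Quotient.mk K p) = Ideal.Quotient.mk I p.fst := fun p => by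
    show π1 (Ideal.Quotient.mk K p) = _
    exact hπ0 p
  let uE : ULift.{max u w} Q ≃ₐ[R] Q := AlgEquiv.ofRingEquiv (f := ULift.ringEquiv) fun r => rfl
  let π' : ULift.{max u w} Q →ₐ[R] B ⧸ I := π1.comp uE.toAlgHom
  have hπ' : ∀ p : TrivSqZeroExt B M,
      π' (ULift.up (Ideal.Quotient.mk K p)) = Ideal.Quotient.mk I p.fst := fun p => hπ1 p
  have hker : ∀ m : M,
      ULift.up.{max u w} (Ideal.Quotient.mk K (TrivSqZeroExt.inr m)) ∈ RingHom.ker π' := by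
    intro m
    rw [RingHom.mem_ker]
    show π' (ULift.up (Ideal.Quotient.mk K (TrivSqZeroExt.inr m))) = 0
    rw [hπ', TrivSqZeroExt.fst_inr, map_zero]
  let ι0 : M →+ RingHom.ker π' :=
    { toFun := fun m => ⟨ULift.up (Ideal.Quotient.mk K (TrivSqZeroExt.inr m)), hker m⟩
      map_zero' := by
        apply Subtype.ext
        apply ULift.down_injective
        show Ideal.Quotient.mk K (TrivSqZeroExt.inr (0 : M)) = 0
        rw [TrivSqZeroExt.inr_zero, map_zero]
      map_add' := by
        intro m m'
        apply Subtype.ext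
        apply ULift.down_injective
        show Ideal.Quotient.mk K (TrivSqZeroExt.inr (m + m')) = _
        rw [TrivSqZeroExt.inr_add, map_add]
        rfl }
  have hinj : Function.Injective ι0 := by
    intro m m' h
    have h' : Ideal.Quotient.mk K (TrivSqZeroExt.inr m)
        = Ideal.Quotient.mk K (TrivSqZeroExt.inr m') :=
      congrArg (fun e => (e : { x // x ∈ RingHom.ker π' }).1.down) h
    rw [Ideal.Quotient.eq] at h'
    obtain ⟨x, hx⟩ := h'
    have h0 : (x : B) = 0 := by
      have h1 := congrArg TrivSqZeroExt.fst hx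
      rw [hk_fst, TrivSqZeroExt.fst_sub, TrivSqZeroExt.fst_inr, TrivSqZeroExt.fst_inr,
        sub_zero] at h1
      exact h1
    have hc : I.toCotangent x = 0 :=
      (I.toCotangent_eq_zero x).mpr (by rw [h0]; exact zero_mem _)
    have h2 := congrArg TrivSqZeroExt.snd hx
    rw [hk_snd, TrivSqZeroExt.snd_sub, TrivSqZeroExt.snd_inr, TrivSqZeroExt.snd_inr,
      hc, map_zero, neg_zero] at h2
    exact sub_eq_zero.mp h2.symm
  have hsurj : Function.Surjective ι0 := by
    rintro ⟨e, he⟩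
    obtain ⟨p, hp⟩ := Ideal.Quotient.mk_surjective (I := K) e.down
    have hfst : p.fst ∈ I := by
      have he0 : π' e = 0 := RingHom.mem_ker.mp he
      have he1 : π' (ULift.up (Ideal.Quotient.mk K p)) = 0 := by
        rw [show ULift.up (Ideal.Quotient.mk K p) = e from ULift.down_injective hp]
        exact he0
      rw [hπ'] at he1
      exact Ideal.Quotient.eq_zero_iff_mem.mp he1
    refine ⟨p.snd + ν (I.toCotangent ⟨p.fst, hfst⟩), ?_⟩
    apply Subtype.ext
    apply ULift.down_injective
    show Ideal.Quotient.mk K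
      (TrivSqZeroExt.inr (p.snd + ν (I.toCotangent ⟨p.fst, hfst⟩))) = e.down
    rw [← hp, Ideal.Quotient.eq]
    refine ⟨-⟨p.fst, hfst⟩, ?_⟩
    apply TrivSqZeroExt.ext
    · rw [hk_fst, TrivSqZeroExt.fst_sub, TrivSqZeroExt.fst_inr]
      show -(⟨p.fst, hfst⟩ : I).1 = _
      rw [zero_sub]
    · rw [hk_snd, TrivSqZeroExt.snd_sub, TrivSqZeroExt.snd_inr, map_neg, map_neg, neg_neg,
        add_sub_cancel_left]
  let S : SquareZeroExtension R (B ⧸ I) M :=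
    { E := ULift.{max u w} Q
      π := π'
      surjective := by
        intro a
        obtain ⟨b, hb⟩ := Ideal.Quotient.mk_surjective a
        exact ⟨ULift.up (Ideal.Quotient.mk K (TrivSqZeroExt.inl b)), by
          rw [hπ', TrivSqZeroExt.fst_inl, hb]⟩
      squareZero := by
        intro x hx y hy
        obtain ⟨p, hp⟩ := Ideal.Quotient.mk_surjective (I := K) x.down
        obtain ⟨q, hq⟩ := Ideal.Quotient.mk_surjective (I := K) y.down
        have hpf : p.fst ∈ I := by
          have h1 : π' (ULift.up (Ideal.Quotient.mk K p)) = 0 := by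
            rw [show ULift.up (Ideal.Quotient.mk K p) = x from ULift.down_injective hp]
            exact RingHom.mem_ker.mp hx
          rw [hπ'] at h1
          exact Ideal.Quotient.eq_zero_iff_mem.mp h1
        have hqf : q.fst ∈ I := by
          have h1 : π' (ULift.up (Ideal.Quotient.mk K q)) = 0 := by
            rw [show ULift.up (Ideal.Quotient.mk K q) = y from ULift.down_injective hq]
            exact RingHom.mem_ker.mp hy
          rw [hπ'] at h1
          exact Ideal.Quotient.eq_zero_iff_mem.mp h1
        have hmem : p.fst * q.fst ∈ I := I.mul_mem_right _ hpf
        have hpq : Ideal.Quotient.mk K (p * q) = 0 := by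
          rw [Ideal.Quotient.eq_zero_iff_mem]
          refine ⟨⟨p.fst * q.fst, hmem⟩, ?_⟩
          have hc : I.toCotangent (⟨p.fst * q.fst, hmem⟩ : I) = 0 :=
            (I.toCotangent_eq_zero _).mpr (by rw [pow_two]; exact Ideal.mul_mem_mul hpf hqf)
          apply TrivSqZeroExt.ext
          · rw [hk_fst, TrivSqZeroExt.fst_mul]
          · rw [hk_snd, hc, map_zero, neg_zero, TrivSqZeroExt.snd_mul, op_smul_eq_smul,
              hIm _ hpf, hIm _ hqf, add_zero]
        apply ULift.down_injective
        show x.down * y.down = 0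
        rw [← hp, ← hq, ← map_mul, hpq]
      ι := AddEquiv.ofBijective ι0 ⟨hinj, hsurj⟩
      ι_linear := by
        intro a m e hea
        obtain ⟨p, hp⟩ := Ideal.Quotient.mk_surjective (I := K) e.down
        have ha : Ideal.Quotient.mk I p.fst = a := by
          rw [← hπ' p, show ULift.up (Ideal.Quotient.mk K p) = e from ULift.down_injective hp]
          exact hea
        have ham : a • m = p.fst • m := by rw [hbm, ha]
        show (ι0 (a • m) : ULift.{max u w} Q) = e * (ι0 m : ULift.{max u w} Q)
        apply ULift.down_injective
        show Ideal.Quotient.mk K (TrivSqZeroExt.inr (a • m))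
            = e.down * Ideal.Quotient.mk K (TrivSqZeroExt.inr m)
        rw [← hp, ← map_mul, ham]
        congr 1
        apply TrivSqZeroExt.ext
        · rw [TrivSqZeroExt.fst_inr, TrivSqZeroExt.fst_mul, TrivSqZeroExt.fst_inr, mul_zero]
        · rw [TrivSqZeroExt.snd_inr, TrivSqZeroExt.snd_mul, TrivSqZeroExt.snd_inr,
            TrivSqZeroExt.fst_inr, MulOpposite.op_zero, zero_smul, add_zero] }
  refine ⟨S, (uE.symm.toAlgHom.comp ((Ideal.Quotient.mkₐ R K).comp
    (TrivSqZeroExt.inlAlgHom R B M)) : B →ₐ[R] S.E), ?_, ?_⟩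
  · apply AlgHom.ext
    intro b
    show π' (uE.symm (Ideal.Quotient.mk K (TrivSqZeroExt.inl b))) = Ideal.Quotient.mk I b
    have : uE.symm (Ideal.Quotient.mk K (TrivSqZeroExt.inl b))
        = ULift.up (Ideal.Quotient.mk K (TrivSqZeroExt.inl b)) := rfl
    rw [this, hπ', TrivSqZeroExt.fst_inl]
  · intro x
    show ((AddEquiv.ofBijective ι0 ⟨hinj, hsurj⟩) (ν (I.toCotangent x)) : ULift.{max u w} Q)
        = uE.symm (Ideal.Quotient.mk K (TrivSqZeroExt.inl (x : B)))
    have h1 : ((AddEquiv.ofBijective ι0 ⟨hinj, hsurj⟩) (ν (I.toCotangent x))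
        : ULift.{max u w} Q)
        = ULift.up (Ideal.Quotient.mk K (TrivSqZeroExt.inr (ν (I.toCotangent x)))) := rfl
    have h2 : uE.symm (Ideal.Quotient.mk K (TrivSqZeroExt.inl (x : B)))
        = ULift.up (Ideal.Quotient.mk K (TrivSqZeroExt.inl (x : B))) := rfl
    rw [h1, h2]
    apply ULift.down_injective
    show Ideal.Quotient.mk K (TrivSqZeroExt.inr (ν (I.toCotangent x)))
        = Ideal.Quotient.mk K (TrivSqZeroExt.inl (x : B))
    rw [Ideal.Quotient.eq]
    refine ⟨-x, ?_⟩
    apply TrivSqZeroExt.ext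
    · rw [hk_fst, TrivSqZeroExt.fst_sub, TrivSqZeroExt.fst_inr, TrivSqZeroExt.fst_inl]
      show -(x : B) = _
      rw [zero_sub]
    · rw [hk_snd, TrivSqZeroExt.snd_sub, TrivSqZeroExt.snd_inr, TrivSqZeroExt.snd_inl, map_neg,
        map_neg, neg_neg, sub_zero]
end

section
/- Let R be a commutative ring, B a commutative R-algebra, I an ideal of B, A := B/I with quotient map φ : B → A, and M an A-module. Let (E, π, ι) and (E′, π′, ι′) be square-zero extensions of A by M, and let λ : B → E and λ′ : B → E′ be R-algebra homomorphisms with π ∘ λ = φ and π′ ∘ λ′ = φ. Since λ(I) ⊆ ker π and λ(I²) = 0, there are unique A-linear maps ν, ν′ : I/I² → M with ι(ν(x + I²)) = λ(x) and ι′(ν′(x + I²)) = λ′(x) for all x ∈ I. Then there exists an isomorphism of square-zero extensions f : (E, π, ι) → (E′, π′, ι′) if and only if there exists an A-linear map θ : Ω_{B/R} ⊗_B A → M with θ ∘ d = ν′ − ν, where d : I/I² → Ω_{B/R} ⊗_B A sends the class of x ∈ I to dx ⊗ 1. -/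
open TensorProduct

universe u v w

/-- An isomorphism of square-zero extensions `(E, π, ι) → (E′, π′, ι′)` is an `R`-algebra
isomorphism `f : E → E′` with `π′ ∘ f = π` and `f ∘ ι = ι′`. -/
def SquareZeroExtension.Iso {R : Type u} {A : Type v} {M : Type w}
    [CommRing R] [CommRing A] [Algebra R A] [AddCommGroup M] [Module A M]
    (S S' : SquareZeroExtension R A M) : Prop :=
  ∃ f : S.E ≃ₐ[R] S'.E, (∀ e : S.E, S'.π (f e) = S.π e) ∧
    ∀ m : M, f (S.ι m : S.E) = (S'.ι m : S'.E)

/-!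
Fix lifts `λ : B → E` and `λ′ : B → E′` of the quotient map. Every element of `E` is
`λ b + ι m`, and `λ b + ι m = λ b′ + ι m′` exactly when `b - b′ = x ∈ I` with `ν x = m′ - m`.
So two extensions that have lifts inducing the same `ν` are isomorphic via
`λ b + ι m ↦ λ′ b + ι′ m`.

The lifts of `B → A` to `E′` form a torsor under `Der_R(B, M) = Hom_A(Ω_{B/R} ⊗_B A, M)`.
An isomorphism `f` gives the derivation `λ′ - f ∘ λ`, which is `ν′ - ν` on `I`. Conversely,
`λ′ - θ ∘ d` is a lift to `E′` that induces `ν`, so the previous paragraph applies.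
-/

lemma KaehlerDifferential.exists_derivation_iff_exists_linearMap_baseChange
    {R B A M : Type*} [CommRing R] [CommRing B] [Algebra R B]
    [CommRing A] [Algebra B A] [AddCommGroup M] [Module A M] [Module B M] [IsScalarTower B A M]
    [Module R M] [IsScalarTower R B M] (P : (B → M) → Prop) :
    (∃ δ : Derivation R B M, P δ) ↔
      ∃ θ : A ⊗[B] Ω[B⁄R] →ₗ[A] M, P fun b => θ (1 ⊗ₜ KaehlerDifferential.D R B b) := by
  constructor
  · rintro ⟨δ, hδ⟩
    refine ⟨δ.liftKaehlerDifferential.liftBaseChange A, ?_⟩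
    simpa only [LinearMap.liftBaseChange_one_tmul, Derivation.liftKaehlerDifferential_comp_D]
      using hδ
  · rintro ⟨θ, hθ⟩
    exact ⟨((LinearMap.liftBaseChangeEquiv A).symm θ).compDer (KaehlerDifferential.D R B), hθ⟩

namespace SquareZeroExtension

section Basic

variable {R : Type u} {A : Type v} {M : Type w} [CommRing R] [CommRing A] [Algebra R A]
  [AddCommGroup M] [Module A M] (S : SquareZeroExtension R A M)

@[simp]
lemma π_ι (m : M) : S.π (S.ι m) = 0 := (S.ι m).2

lemma ι_inj {m m' : M} : (S.ι m : S.E) = S.ι m' ↔ m = m' := by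
  rw [Subtype.coe_inj, S.ι.apply_eq_iff_eq]

lemma ι_mul_ι (m m' : M) : (S.ι m : S.E) * S.ι m' = 0 :=
  S.squareZero _ (S.ι m).2 _ (S.ι m').2

lemma mul_ι (e : S.E) (m : M) : e * S.ι m = S.ι (S.π e • m) :=
  (S.ι_linear _ m e rfl).symm

lemma ι_smul [Module R M] [IsScalarTower R A M] (r : R) (m : M) :
    (S.ι (r • m) : S.E) = r • (S.ι m : S.E) := by
  rw [Algebra.smul_def, mul_ι, AlgHom.commutes, algebraMap_smul]

lemma exists_ι_eq {e : S.E} (he : S.π e = 0) : ∃ m, (S.ι m : S.E) = e :=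
  ⟨S.ι.symm ⟨e, he⟩, by simp⟩

end Basic

section Lift

variable {R : Type u} {B : Type v} [CommRing R] [CommRing B] [Algebra R B] {I : Ideal B}
  {M : Type w} [AddCommGroup M] [Module (B ⧸ I) M] (S : SquareZeroExtension R (B ⧸ I) M)
  {l : B →ₐ[R] S.E}

lemma π_lift (hl : S.π.comp l = Ideal.Quotient.mkₐ R I) (b : B) :
    S.π (l b) = Ideal.Quotient.mk I b := by
  simpa using AlgHom.congr_fun hl b

lemma exists_lift_add_ι_eq (hl : S.π.comp l = Ideal.Quotient.mkₐ R I) (e : S.E) :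
    ∃ b m, l b + S.ι m = e := by
  obtain ⟨b, hb⟩ := Ideal.Quotient.mk_surjective (S.π e)
  obtain ⟨m, hm⟩ := S.exists_ι_eq (e := e - l b) (by simp [S.π_lift hl, hb])
  exact ⟨b, m, by rw [hm, add_sub_cancel]⟩

lemma lift_add_ι_add_lift_add_ι (b₁ b₂ : B) (m₁ m₂ : M) :
    (l b₁ + S.ι m₁) + (l b₂ + S.ι m₂) = l (b₁ + b₂) + S.ι (m₁ + m₂) := by
  simp only [map_add, Submodule.coe_add]
  abel

lemma lift_add_ι_mul_lift_add_ι (hl : S.π.comp l = Ideal.Quotient.mkₐ R I) (b₁ b₂ : B)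
    (m₁ m₂ : M) :
    (l b₁ + S.ι m₁) * (l b₂ + S.ι m₂) =
      l (b₁ * b₂) + S.ι (Ideal.Quotient.mk I b₁ • m₂ + Ideal.Quotient.mk I b₂ • m₁) := by
  have h₁ := S.mul_ι (l b₁) m₂
  have h₂ := S.mul_ι (l b₂) m₁
  rw [S.π_lift hl] at h₁ h₂
  simp only [map_add, map_mul, Submodule.coe_add, ← h₁, ← h₂]
  linear_combination S.ι_mul_ι m₁ m₂

lemma lift_add_ι_eq_lift_add_ι_iff (hl : S.π.comp l = Ideal.Quotient.mkₐ R I)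
    {ν : I.Cotangent →ₗ[B ⧸ I] M} (hν : ∀ x : I, (S.ι (ν (I.toCotangent x)) : S.E) = l x)
    {b b' : B} {m m' : M} :
    l b + S.ι m = l b' + S.ι m' ↔ ∃ x : I, (x : B) = b - b' ∧ ν (I.toCotangent x) = m' - m := by
  constructor
  · intro h
    have hx : b - b' ∈ I := by
      rw [← Ideal.Quotient.eq]
      simpa [S.π_lift hl] using congrArg S.π h
    refine ⟨⟨_, hx⟩, rfl, S.ι_inj.1 ?_⟩
    rw [hν, map_sub, map_sub, Submodule.coe_sub]
    linear_combination h
  · rintro ⟨x, hxb, hxm⟩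
    have hx := hν x
    rw [hxm, hxb, map_sub, map_sub, Submodule.coe_sub] at hx
    linear_combination -hx

lemma exists_algHom_lift_add_ι (S' : SquareZeroExtension R (B ⧸ I) M) {l' : B →ₐ[R] S'.E}
    (hl : S.π.comp l = Ideal.Quotient.mkₐ R I) (hl' : S'.π.comp l' = Ideal.Quotient.mkₐ R I)
    {ν : I.Cotangent →ₗ[B ⧸ I] M} (hν : ∀ x : I, (S.ι (ν (I.toCotangent x)) : S.E) = l x)
    (hν' : ∀ x : I, (S'.ι (ν (I.toCotangent x)) : S'.E) = l' x) :
    ∃ F : S.E →ₐ[R] S'.E, ∀ b m, F (l b + S.ι m) = l' b + S'.ι m := by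
  choose b m hbm using S.exists_lift_add_ι_eq hl
  set F : S.E → S'.E := fun e => l' (b e) + S'.ι (m e)
  have hF (b₀ : B) (m₀ : M) : F (l b₀ + S.ι m₀) = l' b₀ + S'.ι m₀ := by
    rw [S'.lift_add_ι_eq_lift_add_ι_iff hl' hν', ← S.lift_add_ι_eq_lift_add_ι_iff hl hν, hbm]
  have hF_lift (b₀ : B) : F (l b₀) = l' b₀ := by simpa using hF b₀ 0
  refine ⟨
    { toFun := F
      map_one' := by simpa using hF_lift 1
      map_mul' := fun e₁ e₂ => ?_
      map_zero' := by simpa using hF_lift 0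
      map_add' := fun e₁ e₂ => ?_
      commutes' := fun r => by simpa using hF_lift (algebraMap R B r) }, hF⟩
  all_goals
    obtain ⟨b₁, m₁, rfl⟩ := S.exists_lift_add_ι_eq hl e₁
    obtain ⟨b₂, m₂, rfl⟩ := S.exists_lift_add_ι_eq hl e₂
  · simp only [lift_add_ι_mul_lift_add_ι _ hl, lift_add_ι_mul_lift_add_ι _ hl', hF]
  · simp only [lift_add_ι_add_lift_add_ι, hF]

lemma iso_of_lifts (S' : SquareZeroExtension R (B ⧸ I) M) {l' : B →ₐ[R] S'.E}
    (hl : S.π.comp l = Ideal.Quotient.mkₐ R I) (hl' : S'.π.comp l' = Ideal.Quotient.mkₐ R I)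
    {ν : I.Cotangent →ₗ[B ⧸ I] M} (hν : ∀ x : I, (S.ι (ν (I.toCotangent x)) : S.E) = l x)
    (hν' : ∀ x : I, (S'.ι (ν (I.toCotangent x)) : S'.E) = l' x) :
    S.Iso S' := by
  obtain ⟨F, hF⟩ := exists_algHom_lift_add_ι S S' hl hl' hν hν'
  obtain ⟨G, hG⟩ := exists_algHom_lift_add_ι S' S hl' hl hν' hν
  refine ⟨AlgEquiv.ofAlgHom F G ?_ ?_, fun e => ?_, fun m => ?_⟩
  · ext e
    obtain ⟨b, m, rfl⟩ := S'.exists_lift_add_ι_eq hl' e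
    simp [hF, hG]
  · ext e
    obtain ⟨b, m, rfl⟩ := S.exists_lift_add_ι_eq hl e
    simp [hF, hG]
  · obtain ⟨b, m, rfl⟩ := S.exists_lift_add_ι_eq hl e
    simp [hF, π_lift _ hl, π_lift _ hl']
  · simpa using hF 0 m

section Derivation

variable [Module B M] [IsScalarTower B (B ⧸ I) M]

lemma lift_mul_ι (hl : S.π.comp l = Ideal.Quotient.mkₐ R I) (b : B) (m : M) :
    l b * S.ι m = S.ι (b • m) := by
  rw [mul_ι, π_lift _ hl, ← Ideal.Quotient.algebraMap_eq, algebraMap_smul]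

lemma exists_derivation_ι_eq_sub [Module R M] [IsScalarTower R (B ⧸ I) M]
    (hl : S.π.comp l = Ideal.Quotient.mkₐ R I) {l₂ : B →ₐ[R] S.E}
    (hl₂ : S.π.comp l₂ = Ideal.Quotient.mkₐ R I) :
    ∃ δ : Derivation R B M, ∀ b, (S.ι (δ b) : S.E) = l b - l₂ b := by
  choose δ hδ using fun b => S.exists_ι_eq (e := l b - l₂ b) (by simp [π_lift _ hl, π_lift _ hl₂])
  have hadd (a b : B) : δ (a + b) = δ a + δ b := S.ι_inj.1 <| by
    simp only [map_add, Submodule.coe_add, hδ]; abel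
  have hsmul (r : R) (b : B) : δ (r • b) = r • δ b := S.ι_inj.1 <| by
    rw [ι_smul, hδ, hδ, map_smul, map_smul, smul_sub]
  refine ⟨Derivation.mk' ⟨⟨δ, hadd⟩, hsmul⟩ fun a b => S.ι_inj.1 ?_, hδ⟩
  simp only [LinearMap.coe_mk, AddHom.coe_mk, map_add, Submodule.coe_add]
  rw [← lift_mul_ι _ hl, ← lift_mul_ι _ hl₂, hδ, hδ, hδ, map_mul, map_mul]
  ring

lemma exists_lift_eq_sub_ι_derivation [Module R M] [IsScalarTower R B M]
    (hl : S.π.comp l = Ideal.Quotient.mkₐ R I) (δ : Derivation R B M) :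
    ∃ l₂ : B →ₐ[R] S.E, S.π.comp l₂ = Ideal.Quotient.mkₐ R I ∧ ∀ b, l₂ b = l b - S.ι (δ b) := by
  refine ⟨
    { toFun := fun b => l b - S.ι (δ b)
      map_one' := by simp
      map_mul' := fun a b => ?_
      map_zero' := by simp
      map_add' := fun a b => ?_
      commutes' := fun r => by simp }, ?_, fun _ => rfl⟩
  · simp only [map_mul, Derivation.leibniz, map_add, Submodule.coe_add, ← lift_mul_ι _ hl]
    linear_combination -S.ι_mul_ι (δ a) (δ b)
  · simp only [map_add, Submodule.coe_add]; abel
  · ext b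
    simp [π_lift _ hl]

end Derivation

end Lift

end SquareZeroExtension

/-- **Full faithfulness in Proposition 2 (ext1prop)** of "Equivariant deformations of
singular curves with group scheme action": for a presentation `A = B/I` of a commutative
`R`-algebra, an `A`-module `M`, two square-zero extensions `(E, π, ι)`, `(E′, π′, ι′)` of
`A` by `M` with lifts `λ : B → E`, `λ′ : B → E′` of the quotient map, and `ν, ν′ : I/I² → M`
the induced `A`-linear maps (determined by `ι(ν(x + I²)) = λ(x)` resp.
`ι′(ν′(x + I²)) = λ′(x)`), the extensions are isomorphic if and only if there is an
`A`-linear map `θ : Ω_{B/R} ⊗_B A → M` with `θ ∘ d = ν′ − ν`. -/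
theorem squareZeroExtension_iso_iff_exists_theta
    (R : Type u) (B : Type v) [CommRing R] [CommRing B] [Algebra R B]
    (I : Ideal B) (M : Type w) [AddCommGroup M] [Module (B ⧸ I) M]
    (S S' : SquareZeroExtension R (B ⧸ I) M)
    (l : B →ₐ[R] S.E) (l' : B →ₐ[R] S'.E)
    (hl : S.π.comp l = Ideal.Quotient.mkₐ R I)
    (hl' : S'.π.comp l' = Ideal.Quotient.mkₐ R I)
    (ν ν' : I.Cotangent →ₗ[B ⧸ I] M)
    (hν : ∀ x : I, (S.ι (ν (I.toCotangent x)) : S.E) = l x)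
    (hν' : ∀ x : I, (S'.ι (ν' (I.toCotangent x)) : S'.E) = l' x) :
    S.Iso S' ↔
      ∃ θ : ((B ⧸ I) ⊗[B] Ω[B⁄R]) →ₗ[B ⧸ I] M,
        ∀ x : I, θ ((1 : B ⧸ I) ⊗ₜ[B] KaehlerDifferential.D R B (x : B)) =
          ν' (I.toCotangent x) - ν (I.toCotangent x) := by
  let : Module B M := Module.compHom M (algebraMap B (B ⧸ I))
  let : Module R M := Module.compHom M (algebraMap R (B ⧸ I))
  have : IsScalarTower B (B ⧸ I) M := .of_algebraMap_smul fun _ _ => rfl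
  have : IsScalarTower R (B ⧸ I) M := .of_algebraMap_smul fun _ _ => rfl
  have : IsScalarTower R B M := .of_algebraMap_smul fun r m => by
    rw [← algebraMap_smul (B ⧸ I), ← IsScalarTower.algebraMap_apply]; rfl
  refine .trans ?_ <| KaehlerDifferential.exists_derivation_iff_exists_linearMap_baseChange
    (R := R) (A := B ⧸ I) fun δ : B → M =>
      ∀ x : I, δ x = ν' (I.toCotangent x) - ν (I.toCotangent x)
  constructor
  · rintro ⟨f, hfπ, hfι⟩
    obtain ⟨δ, hδ⟩ := S'.exists_derivation_ι_eq_sub hl' (l₂ := (f : S.E →ₐ[R] S'.E).comp l)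
      (by ext b; simp [hfπ, S.π_lift hl])
    exact ⟨δ, fun x => S'.ι_inj.1 (by simp [hδ, ← hν', ← hν, hfι])⟩
  · rintro ⟨δ, hδ⟩
    obtain ⟨l₂, hl₂, hl₂δ⟩ := S'.exists_lift_eq_sub_ι_derivation hl' δ
    exact S.iso_of_lifts S' hl hl₂ hν fun x => by simp [hl₂δ, hδ, ← hν']
end

section
/- Let A be a commutative Noetherian local ring with maximal ideal m_A that is complete with respect to the m_A-adic topology. Let E be a commutative ring and π : E → A a surjective ring homomorphism whose kernel K satisfies K·K = 0 and is finitely generated as an A-module (A acting on K through π, which is well defined since K·K = 0). Set m_E := π⁻¹(m_A). Then E is complete with respect to the m_E-adic topology. -/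
/-- If `π : E →+* A` is surjective and `M` is an `A`-module which is also an `E`-module
with compatible action, then Noetherianity over `A` implies Noetherianity over `E`. -/
theorem aux_isNoetherian_of_surj {E A M : Type*} [CommRing E] [CommRing A] [AddCommGroup M]
    [Module E M] [Module A M] (π : E →+* A) (hπ : Function.Surjective π)
    (hsmul : ∀ (e : E) (m : M), e • m = π e • m) [IsNoetherian A M] : IsNoetherian E M := by
  let mk : Submodule E M → Submodule A M := fun N =>
    { carrier := N
      add_mem' := fun h1 h2 => N.add_mem h1 h2
      zero_mem' := N.zero_mem
      smul_mem' := by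
        rintro a x hx
        obtain ⟨e, rfl⟩ := hπ a
        rw [← hsmul]
        exact N.smul_mem e hx }
  have hmk : ∀ (N : Submodule E M) (x : M), x ∈ mk N ↔ x ∈ N := fun N x => Iff.rfl
  rw [isNoetherian_def]
  intro N
  obtain ⟨s, hs⟩ := IsNoetherian.noetherian (mk N)
  refine ⟨s, le_antisymm (Submodule.span_le.mpr ?_) ?_⟩
  · intro x hx
    have : x ∈ Submodule.span A (↑s : Set M) := Submodule.subset_span hx
    rw [hs] at this
    exact (hmk N x).mp this
  · intro x hx
    have hx' : x ∈ Submodule.span A (↑s : Set M) := by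
      rw [hs]; exact (hmk N x).mpr hx
    have hle : Submodule.span A (↑s : Set M) ≤ mk (Submodule.span E (↑s : Set M)) :=
      Submodule.span_le.mpr (fun y hy => (hmk _ y).mpr (Submodule.subset_span hy))
    exact (hmk _ x).mp (hle hx')

theorem aux_isNoetherianRing {A E : Type*} [CommRing A] [IsNoetherianRing A]
    [CommRing E] (π : E →+* A) (hπ : Function.Surjective π)
    (hsq : ∀ x ∈ RingHom.ker π, ∀ y ∈ RingHom.ker π, x * y = 0)
    (hfg : (RingHom.ker π).FG) : IsNoetherianRing E := by
  classical
  obtain ⟨r, g, hg⟩ := Submodule.fg_iff_exists_fin_generating_family.mp hfg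
  have hgK : ∀ i, g i ∈ RingHom.ker π := fun i => by
    rw [← hg]; exact Submodule.subset_span ⟨i, rfl⟩
  set σ : A → E := Function.surjInv hπ with hσdef
  have hσ : ∀ a, π (σ a) = a := fun a => Function.surjInv_eq hπ a
  have keyg : ∀ (x y : E) (i : Fin r), π x = π y → x * g i = y * g i := by
    intro x y i h
    have hxy : x - y ∈ RingHom.ker π := by
      rw [RingHom.mem_ker, map_sub, h, sub_self]
    have := hsq _ hxy _ (hgK i)
    rw [sub_mul] at this
    exact sub_eq_zero.mp this
  letI : Algebra E A := π.toAlgebra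
  have halg : (algebraMap E A : E →+* A) = π := RingHom.algebraMap_toAlgebra π
  have hsmulA : ∀ (e : E) (a : A), e • a = π e * a := fun e a => by
    rw [Algebra.smul_def, halg]
  -- the E-linear map (Fin r → A) → E
  set φ : (Fin r → A) →ₗ[E] E :=
    { toFun := fun v => ∑ i, σ (v i) * g i
      map_add' := by
        intro v w
        rw [← Finset.sum_add_distrib]
        refine Finset.sum_congr rfl (fun i _ => ?_)
        rw [← add_mul]
        exact keyg _ _ i (by rw [hσ, map_add, hσ, hσ]; rfl)
      map_smul' := by
        intro e v
        simp only [RingHom.id_apply, smul_eq_mul, Finset.mul_sum]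
        refine Finset.sum_congr rfl (fun i _ => ?_)
        rw [← mul_assoc]
        refine keyg _ _ i ?_
        rw [hσ, map_mul, hσ]
        show (e • v) i = π e * v i
        rw [Pi.smul_apply, hsmulA] } with hφdef
  have hφ : ∀ v, φ v = ∑ i, σ (v i) * g i := fun v => rfl
  have hrange : LinearMap.range φ = Submodule.restrictScalars E (RingHom.ker π) := by
    apply le_antisymm
    · rintro x ⟨v, rfl⟩
      rw [Submodule.restrictScalars_mem, RingHom.mem_ker, hφ, map_sum]
      refine Finset.sum_eq_zero (fun i _ => ?_)
      rw [map_mul, RingHom.mem_ker.mp (hgK i), mul_zero]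
    · intro x hx
      rw [Submodule.restrictScalars_mem, ← hg, Submodule.mem_span_range_iff_exists_fun] at hx
      obtain ⟨cf, hcf⟩ := hx
      refine ⟨fun i => π (cf i), ?_⟩
      rw [hφ, ← hcf]
      exact Finset.sum_congr rfl (fun i _ => keyg _ _ i (by rw [hσ]))
  have hker : LinearMap.ker (Algebra.linearMap E A) = Submodule.restrictScalars E (RingHom.ker π) := by
    ext x
    simp [RingHom.mem_ker, Algebra.linearMap_apply, halg]
  haveI : IsNoetherian E (Fin r → A) := by
    haveI : IsNoetherian A (Fin r → A) := inferInstance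
    exact aux_isNoetherian_of_surj π hπ (fun e m => by
      funext i
      rw [Pi.smul_apply, Pi.smul_apply, hsmulA, smul_eq_mul])
  haveI : IsNoetherian E A :=
    aux_isNoetherian_of_surj π hπ (fun e a => by rw [hsmulA, smul_eq_mul])
  have : IsNoetherian E E :=
    isNoetherian_of_range_eq_ker φ (Algebra.linearMap E A) (by rw [hrange, hker])
  exact isNoetherianRing_iff.mpr this

/-- Units of `A` lift to units of `E` along a square-zero (surjective) extension. -/
theorem aux_isUnit_lift {A E : Type*} [CommRing A] [CommRing E] (π : E →+* A)
    (hπ : Function.Surjective π)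
    (hsq : ∀ x ∈ RingHom.ker π, ∀ y ∈ RingHom.ker π, x * y = 0)
    (x : E) (hx : IsUnit (π x)) : IsUnit x := by
  obtain ⟨b, hb⟩ := hx.exists_right_inv
  obtain ⟨y, rfl⟩ := hπ b
  have hk : x * y - 1 ∈ RingHom.ker π := by
    rw [RingHom.mem_ker, map_sub, map_mul, hb, map_one, sub_self]
  have hk2 : (x * y - 1) * (x * y - 1) = 0 := hsq _ hk _ hk
  have : x * (y * (2 - x * y)) = 1 := by linear_combination -hk2
  exact IsUnit.of_mul_eq_one _ this

theorem aux_isLocalRing {A E : Type*} [CommRing A] [IsLocalRing A] [CommRing E]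
    (π : E →+* A) (hπ : Function.Surjective π)
    (hsq : ∀ x ∈ RingHom.ker π, ∀ y ∈ RingHom.ker π, x * y = 0) : IsLocalRing E := by
  haveI : Nontrivial E := ⟨1, 0, fun h => one_ne_zero (α := A) (by rw [← map_one π, h, map_zero])⟩
  refine IsLocalRing.of_isUnit_or_isUnit_one_sub_self (fun a => ?_)
  rcases IsLocalRing.isUnit_or_isUnit_one_sub_self (π a) with h | h
  · exact Or.inl (aux_isUnit_lift π hπ hsq a h)
  · refine Or.inr (aux_isUnit_lift π hπ hsq (1 - a) ?_)
    rwa [map_sub, map_one]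

/-- **Part (i) of the lemma in the proof of Proposition 3.2 (def3prop)** of "Equivariant
deformations of singular curves with group scheme action": let `A` be a commutative
Noetherian local ring, complete with respect to its maximal-ideal-adic topology, and let
`π : E ↠ A` be a surjective ring homomorphism whose kernel `K` satisfies `K·K = 0` and is
finitely generated (as an `A`-module through `π`, equivalently as an ideal of `E`).  Then
`E` is complete with respect to the `m_E`-adic topology, where `m_E := π⁻¹(m_A)`. -/
theorem squareZeroExtension_isAdicComplete
    (A E : Type*) [CommRing A] [IsNoetherianRing A] [IsLocalRing A]
    [IsAdicComplete (IsLocalRing.maximalIdeal A) A]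
    [CommRing E] (π : E →+* A) (hπ : Function.Surjective π)
    (hsq : ∀ x ∈ RingHom.ker π, ∀ y ∈ RingHom.ker π, x * y = 0)
    (hfg : (RingHom.ker π).FG) :
    IsAdicComplete (Ideal.comap π (IsLocalRing.maximalIdeal A)) E := by
  classical
  set K : Ideal E := RingHom.ker π with hKdef
  set mA : Ideal A := IsLocalRing.maximalIdeal A with hmAdef
  set mE : Ideal E := Ideal.comap π mA with hmEdef
  haveI hNE : IsNoetherianRing E := aux_isNoetherianRing π hπ hsq hfg
  haveI hLE : IsLocalRing E := aux_isLocalRing π hπ hsq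
  -- the section
  set σ : A → E := Function.surjInv hπ with hσdef
  have hσ : ∀ a, π (σ a) = a := fun a => Function.surjInv_eq hπ a
  -- generators of K
  obtain ⟨r, g, hg⟩ := Submodule.fg_iff_exists_fin_generating_family.mp hfg
  have hgK : ∀ i, g i ∈ K := fun i => by
    rw [← hg]; exact Submodule.subset_span ⟨i, rfl⟩
  -- smul-top normalizations
  have hst : ∀ I : Ideal E, (I • (⊤ : Submodule E E)) = I := fun I => by
    rw [smul_eq_mul, Ideal.mul_top]
  have hstA : ∀ I : Ideal A, (I • (⊤ : Submodule A A)) = I := fun I => by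
    rw [smul_eq_mul, Ideal.mul_top]
  -- basic ideal facts
  have hmap : Ideal.map π mE = mA := Ideal.map_comap_of_surjective π hπ mA
  have hpowle : ∀ n, mE ^ n ≤ Ideal.comap π (mA ^ n) := fun n => by
    have h := Ideal.le_comap_map (f := π) (I := mE ^ n)
    rwa [Ideal.map_pow, hmap] at h
  have hmemE : ∀ (x : E) (n : ℕ), x ∈ mE ^ n → π x ∈ mA ^ n := fun x n hx =>
    Ideal.mem_comap.mp (hpowle n hx)
  have hcomap : ∀ n, Ideal.comap π (mA ^ n) = mE ^ n ⊔ K := fun n => by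
    rw [← hmap, ← Ideal.map_pow, Ideal.comap_map_of_surjective π hπ (mE ^ n),
      hKdef, RingHom.ker_eq_comap_bot]
  have hmulK : ∀ (w : E) (m : ℕ) (x : E), x ∈ K → π w ∈ mA ^ m → w * x ∈ mE ^ m := by
    intro w m x hx hw
    have hw' : w ∈ mE ^ m ⊔ K := by rw [← hcomap m]; exact Ideal.mem_comap.mpr hw
    obtain ⟨p, hp, q, hq, rfl⟩ := Submodule.mem_sup.mp hw'
    rw [add_mul, hsq q hq x hx, add_zero]
    exact Ideal.mul_mem_right x _ hp
  have hne : mE ≠ ⊤ := by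
    rw [Ne, Ideal.eq_top_iff_one, hmEdef, Ideal.mem_comap, map_one]
    exact (Ideal.ne_top_iff_one mA).mp (IsLocalRing.maximalIdeal.isMaximal A).ne_top
  -- Artin-Rees
  obtain ⟨c, hc⟩ := Ideal.exists_pow_inf_eq_pow_smul mE (K : Submodule E E)
  haveI hH : IsHausdorff mE E := by
    refine ⟨fun x hx => ?_⟩
    have hx' : ∀ n, x ∈ mE ^ n := fun n => by
      have h := hx n
      rwa [SModEq.sub_mem, sub_zero, hst] at h
    have hmem : x ∈ ⨅ n : ℕ, mE ^ n := (Submodule.mem_iInf _).mpr hx'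
    rwa [Ideal.iInf_pow_eq_bot_of_isLocalRing mE hne, Submodule.mem_bot] at hmem
  haveI hP : IsPrecomplete mE E := by
    refine ⟨fun f hf => ?_⟩
    have hfsub : ∀ {m n : ℕ}, m ≤ n → f m - f n ∈ mE ^ m := fun {m n} h => by
      have h' := hf h; rwa [SModEq.sub_mem, hst] at h'
    have hfA : ∀ {m n : ℕ}, m ≤ n →
        π (f m) ≡ π (f n) [SMOD (mA ^ m • ⊤ : Submodule A A)] := fun {m n} h => by
      rw [SModEq.sub_mem, hstA, ← map_sub]
      exact hmemE _ _ (hfsub h)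
    haveI hpre : IsPrecomplete mA A := inferInstance
    obtain ⟨a, ha⟩ := hpre.prec hfA
    have ha' : ∀ n, π (f n) - a ∈ mA ^ n := fun n => by
      have h := ha n; rwa [SModEq.sub_mem, hstA] at h
    -- decompose f n - σ a
    have hdecomp : ∀ n, ∃ u ∈ mE ^ n, ∃ k ∈ K, f n - σ a = u + k := fun n => by
      have h1 : f n - σ a ∈ mE ^ n ⊔ K := by
        rw [← hcomap n, Ideal.mem_comap, map_sub, hσ]
        exact ha' n
      obtain ⟨u, hu, k, hk, h⟩ := Submodule.mem_sup.mp h1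
      exact ⟨u, hu, k, hk, h.symm⟩
    choose u hu k hk huk using hdecomp
    set d : ℕ → E := fun n => k (n + 1) - k n with hddef
    have hdmem : ∀ n, d n ∈ mE ^ n ⊓ K := fun n => by
      refine Submodule.mem_inf.mpr ⟨?_, sub_mem (hk (n + 1)) (hk n)⟩
      have heq : d n = (f (n + 1) - f n) - (u (n + 1) - u n) := by
        rw [hddef]
        linear_combination (huk n) - (huk (n + 1))
      rw [heq]
      refine sub_mem ?_ (sub_mem (Ideal.pow_le_pow_right (Nat.le_succ n) (hu (n + 1))) (hu n))
      have := hfsub (Nat.le_succ n)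
      rw [show f (n+1) - f n = -(f n - f (n+1)) by ring]
      exact neg_mem this
    have hdK : ∀ n, d n ∈ mE ^ (n - c) • (K : Submodule E E) := fun n => by
      by_cases h : c ≤ n
      · have h1 := hc n h
        rw [hst, hst] at h1
        have h2 : d n ∈ mE ^ (n - c) • (mE ^ c ⊓ (K : Submodule E E)) := h1 ▸ hdmem n
        exact Submodule.smul_mono le_rfl inf_le_right h2
      · push_neg at h
        rw [Nat.sub_eq_zero_of_le h.le, pow_zero, Ideal.one_eq_top, Submodule.top_smul]
        exact (Submodule.mem_inf.mp (hdmem n)).2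
    -- representation with coefficients
    have hrep : ∀ n, ∃ b : Fin r →₀ E, (∀ i, b i ∈ mE ^ (n - c)) ∧
        (b.sum fun i e => e • g i) = d n := fun n => by
      have h1 : d n ∈ mE ^ (n - c) • Submodule.span E (Set.range g) := by
        rw [hg]; exact hdK n
      obtain ⟨b, hb1, hb2⟩ := (Submodule.mem_ideal_smul_span_iff_exists_sum _ g _).mp h1
      exact ⟨b, hb1, hb2⟩
    choose b hb1 hb2 using hrep
    have hbsum : ∀ n, d n = ∑ i, b n i * g i := fun n => by
      rw [← hb2 n, Finsupp.sum_fintype _ _ (fun i => zero_smul E (g i))]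
      exact Finset.sum_congr rfl (fun i _ => (smul_eq_mul (b n i) (g i)).symm ▸ rfl)
    set s : ℕ → Fin r → E := fun n i => ∑ j ∈ Finset.range n, b j i with hsdef
    have htel : ∀ n, k n - k 0 = ∑ i, s n i * g i := fun n => by
      have h1 : k n - k 0 = ∑ j ∈ Finset.range n, d j :=
        (Finset.sum_range_sub (fun j => k j) n).symm
      rw [h1, Finset.sum_congr rfl (fun j _ => hbsum j), Finset.sum_comm]
      exact Finset.sum_congr rfl (fun i _ => (Finset.sum_mul _ _ _).symm)
    -- Cauchy coefficient sequences in A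
    have hsc : ∀ (i : Fin r) {m n : ℕ}, m ≤ n →
        π (s (m + c) i) ≡ π (s (n + c) i) [SMOD (mA ^ m • ⊤ : Submodule A A)] := by
      intro i m n h
      rw [SModEq.sub_mem, hstA, ← map_sub]
      have heq : s (m + c) i - s (n + c) i = -(∑ j ∈ Finset.Ico (m + c) (n + c), b j i) := by
        rw [hsdef, Finset.sum_Ico_eq_sub _ (by omega : m + c ≤ n + c)]
        ring
      rw [heq, map_neg]
      refine neg_mem ?_
      rw [map_sum]
      refine Submodule.sum_mem _ (fun j hj => ?_)
      have hj' : m + c ≤ j := (Finset.mem_Ico.mp hj).1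
      exact hmemE _ _ (Ideal.pow_le_pow_right (by omega) (hb1 j i))
    choose t ht using fun i : Fin r => hpre.prec (hsc i)
    have ht' : ∀ i n, π (s (n + c) i) - t i ∈ mA ^ n := fun i n => by
      have h := ht i n; rwa [SModEq.sub_mem, hstA] at h
    set L : E := σ a + k 0 + ∑ i, σ (t i) * g i with hLdef
    have hmain : ∀ m, f (m + c) - L ∈ mE ^ m := by
      intro m
      have heq : f (m + c) - L = u (m + c) + ∑ i, (s (m + c) i - σ (t i)) * g i := by
        rw [hLdef, Finset.sum_congr rfl (fun i (_ : i ∈ Finset.univ) =>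
          sub_mul (s (m + c) i) (σ (t i)) (g i)), Finset.sum_sub_distrib]
        linear_combination (huk (m + c)) + (htel (m + c))
      rw [heq]
      refine add_mem (Ideal.pow_le_pow_right (by omega) (hu (m + c)))
        (Submodule.sum_mem _ (fun i _ => ?_))
      refine hmulK _ m _ (hgK i) ?_
      rw [map_sub, hσ]
      exact ht' i m
    refine ⟨L, fun n => ?_⟩
    rw [SModEq.sub_mem, hst]
    have h1 : f n - f (n + c) ∈ mE ^ n := hfsub (Nat.le_add_right n c)
    have h2 := hmain n
    rw [show f n - L = (f n - f (n + c)) + (f (n + c) - L) by ring]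
    exact add_mem h1 h2
  exact ⟨⟩
end

section
/- Let R′ be a commutative ring and 𝔞 an ideal of R′ with 𝔞·𝔞 = 0; set R := R′/𝔞 (so 𝔞 is naturally an R-module). Let A be a commutative R-algebra that is flat as an R-module, regarded as an R′-algebra via R′ → R. Let E be a commutative R′-algebra and π : E → A a surjective R′-algebra homomorphism whose kernel K satisfies K·K = 0. Then 𝔞·E ⊆ K, 𝔞·K = 0, and there is a well-defined A-linear map μ : A ⊗_R 𝔞 → K with μ(π(e) ⊗ α) = α·e for all e ∈ E and α ∈ 𝔞. Moreover, the following are equivalent: (a) E is flat as an R′-module and the induced surjection E/𝔞E → A is an isomorphism; (b) μ is bijective. -/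
open TensorProduct

/-- An ideal `𝔞` with `𝔞·𝔞 = 0` is naturally a module over `R'/𝔞`. -/
def idealSqZeroModule (R' : Type*) [CommRing R'] (𝔞 : Ideal R')
    (h : ∀ x ∈ 𝔞, ∀ y ∈ 𝔞, x * y = 0) : Module (R' ⧸ 𝔞) 𝔞 :=
  Module.IsTorsionBySet.module (I := 𝔞)
    (fun x a => Subtype.ext (by simpa [smul_eq_mul] using h a.1 a.2 x.1 x.2))

/-- The kernel `K` of a surjection `π : E ↠ A` with `K·K = 0` is naturally an `A`-module
(`a • k := e * k` for any `e` with `π e = a`). -/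
noncomputable def kerSqZeroModule {E A : Type*} [CommRing E] [CommRing A]
    (π : E →+* A) (hπ : Function.Surjective π)
    (hsq : ∀ x ∈ RingHom.ker π, ∀ y ∈ RingHom.ker π, x * y = 0) :
    Module A (RingHom.ker π) :=
  letI : Module (E ⧸ RingHom.ker π) (RingHom.ker π) :=
    Module.IsTorsionBySet.module (I := RingHom.ker π)
      (fun x a => Subtype.ext (by simpa [smul_eq_mul] using hsq a.1 a.2 x.1 x.2))
  Module.compHom (RingHom.ker π) (RingHom.quotientKerEquivOfSurjective hπ).symm.toRingHom

section Aux
variable {R' : Type*} [CommRing R'] (𝔞 : Ideal R')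
  {A : Type*} [CommRing A] [Algebra R' A] [Algebra (R' ⧸ 𝔞) A] [IsScalarTower R' (R' ⧸ 𝔞) A]
  {E : Type*} [CommRing E] [Algebra R' E]

lemma aux_smul_zero' {N : Type*} [AddCommMonoid N] [Module R' N] [Module (R' ⧸ 𝔞) N]
    [IsScalarTower R' (R' ⧸ 𝔞) N] {α : R'} (hα : α ∈ 𝔞) (n : N) : α • n = 0 := by
  rw [← algebraMap_smul (R' ⧸ 𝔞) α n, Ideal.Quotient.algebraMap_eq,
    Ideal.Quotient.eq_zero_iff_mem.mpr hα, zero_smul]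

lemma aux_tmul_zero' {N : Type*} [AddCommGroup N] [Module R' N] [Module (R' ⧸ 𝔞) N]
    [IsScalarTower R' (R' ⧸ 𝔞) N] {j : E} (hj : j ∈ Ideal.map (algebraMap R' E) 𝔞) (n : N) :
    (n ⊗ₜ[R'] j : N ⊗[R'] E) = 0 := by
  have h : ∀ x, x ∈ Ideal.span ((algebraMap R' E) '' 𝔞) →
      ∀ (n : N) (s : E), (n ⊗ₜ[R'] (s * x) : N ⊗[R'] E) = 0 := by
    intro x hx
    refine Submodule.span_induction ?_ ?_ ?_ ?_ hx
    · rintro _ ⟨α, hα, rfl⟩ n s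
      have : s * algebraMap R' E α = α • s := by
        rw [Algebra.smul_def, mul_comm]
      rw [this, ← smul_tmul, aux_smul_zero' 𝔞 hα, zero_tmul]
    · intro n s; rw [mul_zero, tmul_zero]
    · intro x y _ _ hx hy n s
      rw [mul_add, tmul_add, hx, hy, add_zero]
    · intro t x _ hx n s
      rw [smul_eq_mul, ← mul_assoc, hx]
  simpa using h j hj n 1

lemma theta_bijective (π : E →ₐ[R'] A) (hπ : Function.Surjective π)
    (hK : RingHom.ker π.toRingHom ≤ Ideal.map (algebraMap R' E) 𝔞)
    (N : Type*) [AddCommGroup N] [Module R' N] [Module (R' ⧸ 𝔞) N]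
    [IsScalarTower R' (R' ⧸ 𝔞) N] :
    ∃ θ : N ⊗[R'] E →+ N ⊗[R' ⧸ 𝔞] A,
      (∀ (n : N) (e : E), θ (n ⊗ₜ e) = n ⊗ₜ π e) ∧ Function.Bijective θ := by
  -- the key vanishing lemma
  have key : ∀ (n : N) (x y : E), π x = π y → (n ⊗ₜ[R'] x : N ⊗[R'] E) = n ⊗ₜ y := by
    intro n x y h
    have hxy : x - y ∈ Ideal.map (algebraMap R' E) 𝔞 := by
      apply hK
      simp [RingHom.mem_ker, h]
    have := aux_tmul_zero' 𝔞 hxy n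
    rw [tmul_sub, sub_eq_zero] at this
    exact this
  -- θ : forward map
  obtain ⟨sec, hsec⟩ : ∃ sec : A → E, ∀ a, π (sec a) = a := by
    choose sec hsec using hπ; exact ⟨sec, hsec⟩
  let F : N →+ E →+ N ⊗[R' ⧸ 𝔞] A :=
    AddMonoidHom.mk' (fun n => AddMonoidHom.mk' (fun e => n ⊗ₜ[R' ⧸ 𝔞] π e)
        (fun e e' => by rw [map_add, tmul_add]))
      (fun n n' => AddMonoidHom.ext fun e => by simp [add_tmul])
  have hF : ∀ (r : R') (n : N) (e : E), F (r • n) e = F n (r • e) := by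
    intro r n e
    show (r • n) ⊗ₜ[R' ⧸ 𝔞] π e = n ⊗ₜ[R' ⧸ 𝔞] π (r • e)
    rw [map_smul, ← algebraMap_smul (R' ⧸ 𝔞) r (π e), tmul_smul,
      ← smul_tmul', algebraMap_smul]
  let θ : N ⊗[R'] E →+ N ⊗[R' ⧸ 𝔞] A := TensorProduct.liftAddHom F hF
  have hθ : ∀ (n : N) (e : E), θ (n ⊗ₜ e) = n ⊗ₜ π e := fun n e => rfl
  -- δ : backward map
  let G : N →+ A →+ N ⊗[R'] E :=
    AddMonoidHom.mk' (fun n => AddMonoidHom.mk' (fun a => n ⊗ₜ[R'] sec a)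
        (fun a a' => by
          rw [← tmul_add]
          exact key n _ _ (by rw [hsec, map_add, hsec, hsec])))
      (fun n n' => AddMonoidHom.ext fun a => by simp [add_tmul])
  have hG : ∀ (r : R' ⧸ 𝔞) (n : N) (a : A), G (r • n) a = G n (r • a) := by
    intro r n a
    obtain ⟨r', rfl⟩ := Ideal.Quotient.mk_surjective r
    show (Ideal.Quotient.mk 𝔞 r' • n) ⊗ₜ[R'] sec a = n ⊗ₜ[R'] sec (Ideal.Quotient.mk 𝔞 r' • a)
    have h1 : sec (Ideal.Quotient.mk 𝔞 r' • a) = sec (Ideal.Quotient.mk 𝔞 r' • a) := rfl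
    have h2 : (n ⊗ₜ[R'] sec (Ideal.Quotient.mk 𝔞 r' • a) : N ⊗[R'] E) = n ⊗ₜ (r' • sec a) := by
      refine key n _ _ ?_
      rw [hsec, map_smul, hsec, ← Ideal.Quotient.algebraMap_eq, algebraMap_smul]
    rw [h2, ← smul_tmul, ← Ideal.Quotient.algebraMap_eq, algebraMap_smul]
  let δ : N ⊗[R' ⧸ 𝔞] A →+ N ⊗[R'] E := TensorProduct.liftAddHom G hG
  have hδ : ∀ (n : N) (a : A), δ (n ⊗ₜ a) = n ⊗ₜ sec a := fun n a => rfl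
  have hδθ : ∀ x, δ (θ x) = x := by
    intro x
    induction x using TensorProduct.induction_on with
    | zero => simp
    | tmul n e => rw [hθ, hδ]; exact key n _ _ (hsec _)
    | add x y hx hy => rw [map_add, map_add, hx, hy]
  refine ⟨θ, hθ, Function.LeftInverse.injective hδθ, ?_⟩
  intro z
  induction z using TensorProduct.induction_on with
  | zero => exact ⟨0, map_zero θ⟩
  | tmul n a => exact ⟨n ⊗ₜ sec a, by rw [hθ, hsec]⟩
  | add x y hx hy =>
    obtain ⟨x', rfl⟩ := hx; obtain ⟨y', rfl⟩ := hy
    exact ⟨x' + y', map_add θ x' y'⟩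

lemma aux_tower' {N : Type*} [AddCommGroup N] [Module R' N] [Module (R' ⧸ 𝔞) N]
    (hmk : ∀ (r : R') (x : N), (Ideal.Quotient.mk 𝔞 r) • x = r • x) :
    IsScalarTower R' (R' ⧸ 𝔞) N :=
  ⟨fun r' q x => by
    obtain ⟨s, rfl⟩ := Ideal.Quotient.mk_surjective q
    have h1 : r' • (Ideal.Quotient.mk 𝔞 s) = Ideal.Quotient.mk 𝔞 (r' * s) := rfl
    rw [h1, hmk, hmk, mul_smul]⟩

end Aux

set_option maxHeartbeats 2000000 in
set_option synthInstance.maxHeartbeats 400000 in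
/-- **Ring-theoretic core of Proposition 3.1 (def1prop)** of "Equivariant deformations of
singular curves with group scheme action": let `𝔞 ≤ R'` be a square-zero ideal,
`R := R'/𝔞`, `A` a flat `R`-algebra, and `π : E ↠ A` a surjective `R'`-algebra
homomorphism with square-zero kernel `K`.  Then `𝔞·E ⊆ K`, `𝔞·K = 0`, there is a
well-defined `A`-linear map `μ : A ⊗_R 𝔞 → K` with `μ(π(e) ⊗ α) = α·e`, and `E` is flat
over `R'` with the induced surjection `E/𝔞E → A` an isomorphism if and only if `μ`
is bijective. -/
theorem flat_deformation_iff_kernel_map_bijective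
    (R' : Type*) [CommRing R'] (𝔞 : Ideal R')
    (hsq𝔞 : ∀ x ∈ 𝔞, ∀ y ∈ 𝔞, x * y = 0)
    (A : Type*) [CommRing A] [Algebra R' A] [Algebra (R' ⧸ 𝔞) A]
    [IsScalarTower R' (R' ⧸ 𝔞) A] [Module.Flat (R' ⧸ 𝔞) A]
    (E : Type*) [CommRing E] [Algebra R' E]
    (π : E →ₐ[R'] A) (hπ : Function.Surjective π)
    (hsqK : ∀ x ∈ RingHom.ker π.toRingHom, ∀ y ∈ RingHom.ker π.toRingHom, x * y = 0) :
    Ideal.map (algebraMap R' E) 𝔞 ≤ RingHom.ker π.toRingHom ∧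
    (∀ α ∈ 𝔞, ∀ k ∈ RingHom.ker π.toRingHom, algebraMap R' E α * k = 0) ∧
    (letI : Module (R' ⧸ 𝔞) 𝔞 := idealSqZeroModule R' 𝔞 hsq𝔞
     letI : Module A (RingHom.ker π.toRingHom) :=
       kerSqZeroModule π.toRingHom hπ hsqK
     ∃ μ : (A ⊗[R' ⧸ 𝔞] 𝔞) →ₗ[A] RingHom.ker π.toRingHom,
       (∀ (e : E) (α : 𝔞), (μ (π e ⊗ₜ α) : E) = algebraMap R' E α * e) ∧
       ∀ h0 : ∀ a ∈ Ideal.map (algebraMap R' E) 𝔞, π.toRingHom a = 0,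
         ((Module.Flat R' E ∧
             Function.Bijective
               (Ideal.Quotient.lift (Ideal.map (algebraMap R' E) 𝔞) π.toRingHom h0)) ↔
           Function.Bijective μ)) := by
  classical
  have hπα : ∀ α ∈ 𝔞, π (algebraMap R' E α) = 0 := by
    intro α hα
    rw [AlgHom.commutes, IsScalarTower.algebraMap_apply R' (R' ⧸ 𝔞) A,
      Ideal.Quotient.algebraMap_eq, Ideal.Quotient.eq_zero_iff_mem.mpr hα, map_zero]
  have hJK : Ideal.map (algebraMap R' E) 𝔞 ≤ RingHom.ker π.toRingHom := by
    rw [Ideal.map_le_iff_le_comap]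
    intro α hα
    simpa [Ideal.mem_comap, RingHom.mem_ker] using hπα α hα
  have h𝔞K : ∀ α ∈ 𝔞, ∀ k ∈ RingHom.ker π.toRingHom, algebraMap R' E α * k = 0 := by
    intro α hα k hk
    exact hsqK _ (by simpa [RingHom.mem_ker] using hπα α hα) _ hk
  refine ⟨hJK, h𝔞K, ?_⟩
  letI instR𝔞 : Module (R' ⧸ 𝔞) 𝔞 := idealSqZeroModule R' 𝔞 hsq𝔞
  letI instEK : Module (E ⧸ RingHom.ker π.toRingHom) (RingHom.ker π.toRingHom) :=
    Module.IsTorsionBySet.module (I := RingHom.ker π.toRingHom)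
      (fun x a => Subtype.ext (by show (a : E) * (x : E) = 0; exact hsqK a.1 a.2 x.1 x.2))
  letI instAK : Module A (RingHom.ker π.toRingHom) := kerSqZeroModule π.toRingHom hπ hsqK
  letI instRK : Module (R' ⧸ 𝔞) (RingHom.ker π.toRingHom) :=
    Module.compHom (RingHom.ker π.toRingHom) (algebraMap (R' ⧸ 𝔞) A)
  letI instTowK : IsScalarTower (R' ⧸ 𝔞) A (RingHom.ker π.toRingHom) :=
    ⟨fun r a k => by rw [Algebra.smul_def, mul_smul]; rfl⟩
  letI instTow𝔞 : IsScalarTower R' (R' ⧸ 𝔞) 𝔞 := aux_tower' 𝔞 (fun r x => rfl)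
  -- the key smul computation in K
  have hsmulK : ∀ (e : E) (k : RingHom.ker π.toRingHom),
      (((π e) • k : RingHom.ker π.toRingHom) : E) = e * (k : E) := by
    intro e k
    have h0' : (RingHom.quotientKerEquivOfSurjective hπ)
        (Ideal.Quotient.mk (RingHom.ker π.toRingHom) e) = π e := rfl
    have h1 : (RingHom.quotientKerEquivOfSurjective hπ).symm (π e) =
        Ideal.Quotient.mk (RingHom.ker π.toRingHom) e := by
      rw [← h0', RingEquiv.symm_apply_apply]
    show (((RingHom.quotientKerEquivOfSurjective hπ).symm (π e)) •
        k : RingHom.ker π.toRingHom).1 = e * k.1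
    rw [h1]
    rfl
  -- the map ι : 𝔞 → K
  have hιmem : ∀ α : 𝔞, algebraMap R' E α ∈ RingHom.ker π.toRingHom :=
    fun α => hJK (Ideal.mem_map_of_mem _ α.2)
  have halg : ∀ r' : R', algebraMap (R' ⧸ 𝔞) A (Ideal.Quotient.mk 𝔞 r') =
      π (algebraMap R' E r') := by
    intro r'
    rw [AlgHom.commutes, IsScalarTower.algebraMap_apply R' (R' ⧸ 𝔞) A,
      Ideal.Quotient.algebraMap_eq]
  let ι : 𝔞 →ₗ[R' ⧸ 𝔞] (RingHom.ker π.toRingHom) :=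
    { toFun := fun α => ⟨algebraMap R' E α, hιmem α⟩
      map_add' := fun α β => Subtype.ext (by simp [map_add]; rfl)
      map_smul' := by
        intro r α
        obtain ⟨r', rfl⟩ := Ideal.Quotient.mk_surjective r
        refine Subtype.ext ?_
        show algebraMap R' E (((Ideal.Quotient.mk 𝔞 r') • α : 𝔞) : R') =
          ((((Ideal.Quotient.mk 𝔞 r') • (⟨algebraMap R' E α.1, hιmem α⟩ :
            RingHom.ker π.toRingHom)) : RingHom.ker π.toRingHom) : E)
        have hL : (((Ideal.Quotient.mk 𝔞 r') • α : 𝔞) : R') = r' * α.1 := rfl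
        have hR : (((Ideal.Quotient.mk 𝔞 r') • (⟨algebraMap R' E α.1, hιmem α⟩ :
            RingHom.ker π.toRingHom)) : RingHom.ker π.toRingHom)
            = (algebraMap (R' ⧸ 𝔞) A (Ideal.Quotient.mk 𝔞 r')) •
              (⟨algebraMap R' E α.1, hιmem α⟩ : RingHom.ker π.toRingHom) := rfl
        rw [hL, hR, halg r', hsmulK, map_mul] }
  let μ : (A ⊗[R' ⧸ 𝔞] 𝔞) →ₗ[A] RingHom.ker π.toRingHom := LinearMap.liftBaseChange A ι
  have hμtmul : ∀ (a : A) (α : 𝔞), μ (a ⊗ₜ α) = a • ι α := fun a α => rfl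
  have hμ : ∀ (e : E) (α : 𝔞), (μ (π e ⊗ₜ α) : E) = algebraMap R' E α * e := by
    intro e α
    rw [hμtmul, hsmulK, mul_comm]
    rfl
  refine ⟨μ, hμ, ?_⟩
  intro h0
  set J := Ideal.map (algebraMap R' E) 𝔞 with hJdef
  set ψ := Ideal.Quotient.lift J π.toRingHom h0 with hψdef
  let lcomm : 𝔞 ⊗[R' ⧸ 𝔞] A →ₗ[R' ⧸ 𝔞] (A ⊗[R' ⧸ 𝔞] 𝔞) :=
    (TensorProduct.comm (R' ⧸ 𝔞) 𝔞 A).toLinearMap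
  have hlcomm_tmul : ∀ (α : 𝔞) (a : A), lcomm (α ⊗ₜ a) = a ⊗ₜ α := fun _ _ => rfl
  have hlcomm_bij : Function.Bijective lcomm := (TensorProduct.comm (R' ⧸ 𝔞) 𝔞 A).bijective
  let llid : R' ⊗[R'] E →ₗ[R'] E := (TensorProduct.lid R' E).toLinearMap
  have hllid_tmul : ∀ (r : R') (e : E), llid (r ⊗ₜ e) = r • e := fun _ _ => rfl
  have hllid_inj : Function.Injective llid := (TensorProduct.lid R' E).injective
  let llidA : (R' ⧸ 𝔞) ⊗[R' ⧸ 𝔞] A →ₗ[R' ⧸ 𝔞] A := (TensorProduct.lid (R' ⧸ 𝔞) A).toLinearMap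
  have hllidA_tmul : ∀ (r : R' ⧸ 𝔞) (a : A), llidA (r ⊗ₜ a) = r • a := fun _ _ => rfl
  have hllidA_inj : Function.Injective llidA := (TensorProduct.lid (R' ⧸ 𝔞) A).injective
  have hψmk : ∀ e : E, ψ (Ideal.Quotient.mk J e) = π e := fun e => rfl
  have hψs : Function.Surjective ψ := by
    intro a
    obtain ⟨e, rfl⟩ := hπ a
    exact ⟨Ideal.Quotient.mk J e, hψmk e⟩
  -- range of μ is contained in J
  have hrangeJ : ∀ z : A ⊗[R' ⧸ 𝔞] 𝔞, (μ z : E) ∈ J := by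
    intro z
    induction z using TensorProduct.induction_on with
    | zero =>
      rw [μ.map_zero, ZeroMemClass.coe_zero]
      exact J.zero_mem
    | tmul a α =>
      obtain ⟨e, rfl⟩ := hπ a
      rw [hμ]
      exact Ideal.mul_mem_right e _ (Ideal.mem_map_of_mem _ α.2)
    | add x y hx hy =>
      rw [μ.map_add]
      exact add_mem hx hy
  have hKJ_of_surj : Function.Surjective μ → RingHom.ker π.toRingHom ≤ J := by
    intro hs k hk
    obtain ⟨z, hz⟩ := hs ⟨k, hk⟩
    have := hrangeJ z
    rw [hz] at this
    exact this
  have hsurj_of_KJ : RingHom.ker π.toRingHom ≤ J → Function.Surjective μ := by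
    intro hKJ k
    have h : ∀ x ∈ Ideal.span ((algebraMap R' E) '' 𝔞), ∃ z, (μ z : E) = x := by
      intro x hx
      refine Submodule.span_induction ?_ ?_ ?_ ?_ hx
      · rintro _ ⟨α, hα, rfl⟩
        refine ⟨(1 : A) ⊗ₜ ⟨α, hα⟩, ?_⟩
        have h1 := hμ 1 ⟨α, hα⟩
        rw [map_one] at h1
        rw [h1, mul_one]
      · exact ⟨0, by rw [μ.map_zero, ZeroMemClass.coe_zero]⟩
      · rintro x y _ _ ⟨z, hz⟩ ⟨w, hw⟩
        refine ⟨z + w, ?_⟩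
        rw [μ.map_add, Submodule.coe_add, hz, hw]
      · rintro e x _ ⟨z, hz⟩
        refine ⟨(π e) • z, ?_⟩
        rw [μ.map_smul, hsmulK, hz, smul_eq_mul]
    obtain ⟨z, hz⟩ := h k.1 (hKJ k.2)
    exact ⟨z, Subtype.ext hz⟩
  have hψinj_of_KJ : RingHom.ker π.toRingHom ≤ J → Function.Injective ψ := by
    intro hKJ
    rw [injective_iff_map_eq_zero]
    intro x hx
    obtain ⟨e, rfl⟩ := Ideal.Quotient.mk_surjective x
    rw [hψmk] at hx
    exact Ideal.Quotient.eq_zero_iff_mem.mpr (hKJ (by simpa [RingHom.mem_ker] using hx))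
  have hKJ_of_ψinj : Function.Injective ψ → RingHom.ker π.toRingHom ≤ J := by
    intro h k hk
    have h1 : ψ (Ideal.Quotient.mk J k) = 0 := by
      rw [hψmk]
      simpa [RingHom.mem_ker] using hk
    have h2 := h (by rw [h1, map_zero] : ψ (Ideal.Quotient.mk J k) = ψ 0)
    exact Ideal.Quotient.eq_zero_iff_mem.mp h2
  constructor
  · rintro ⟨hflat, hψbij⟩
    have hKJ : RingHom.ker π.toRingHom ≤ J := hKJ_of_ψinj hψbij.1
    refine ⟨?_, hsurj_of_KJ hKJ⟩
    -- injectivity of μ from flatness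
    obtain ⟨θ0, hθ0, hbij0⟩ := theta_bijective 𝔞 π hπ hKJ 𝔞
    have hm : Function.Injective (LinearMap.rTensor E (𝔞.subtype)) :=
      (Module.Flat.iff_rTensor_injective' (R := R') (M := E)).mp hflat 𝔞
    have hchain : ∀ y : 𝔞 ⊗[R'] E,
        (μ (lcomm (θ0 y)) : E) = llid (LinearMap.rTensor E (𝔞.subtype) y) := by
      intro y
      induction y using TensorProduct.induction_on with
      | zero =>
        rw [θ0.map_zero, lcomm.map_zero, μ.map_zero, (LinearMap.rTensor E 𝔞.subtype).map_zero,
          llid.map_zero, ZeroMemClass.coe_zero]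
      | tmul α e =>
        rw [hθ0, hlcomm_tmul, hμ]
        have h2 : LinearMap.rTensor E (𝔞.subtype) (α ⊗ₜ e) = (α : R') ⊗ₜ e := rfl
        rw [h2, hllid_tmul, Algebra.smul_def]
      | add x y hx hy =>
        rw [θ0.map_add, lcomm.map_add, μ.map_add, (LinearMap.rTensor E 𝔞.subtype).map_add,
          llid.map_add, Submodule.coe_add, hx, hy]
    intro z z' hzz
    obtain ⟨w, hw⟩ := hlcomm_bij.2 z
    obtain ⟨y, hy⟩ := hbij0.2 w
    obtain ⟨w', hw'⟩ := hlcomm_bij.2 z'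
    obtain ⟨y', hy'⟩ := hbij0.2 w'
    have hz : lcomm (θ0 y) = z := by rw [hy, hw]
    have hz' : lcomm (θ0 y') = z' := by rw [hy', hw']
    have e1 := hchain y
    have e2 := hchain y'
    rw [hz] at e1
    rw [hz'] at e2
    have e3 : llid (LinearMap.rTensor E (𝔞.subtype) y) =
        llid (LinearMap.rTensor E (𝔞.subtype) y') := by
      rw [← e1, ← e2, hzz]
    have hyy : y = y' := hm (hllid_inj e3)
    rw [← hz, ← hz', hyy]
  · intro hμbij
    have hKJ : RingHom.ker π.toRingHom ≤ J := hKJ_of_surj hμbij.2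
    refine ⟨?_, hψinj_of_KJ hKJ, hψs⟩
    rw [Module.Flat.iff_rTensor_injective' (R := R') (M := E)]
    intro I
    rw [injective_iff_map_eq_zero]
    intro x hx
    -- set up the exact sequence (I ⊓ 𝔞) → I → Ibar → 0
    set Ibar : Ideal (R' ⧸ 𝔞) := I.map (Ideal.Quotient.mk 𝔞) with hIbar
    let t : I →ₗ[R'] Ibar :=
      { toFun := fun x => ⟨Ideal.Quotient.mk 𝔞 x.1, Ideal.mem_map_of_mem _ x.2⟩
        map_add' := fun x y => Subtype.ext (by simp)
        map_smul' := fun r x => Subtype.ext (by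
          show Ideal.Quotient.mk 𝔞 ((r • x : I) : R') = r • (Ideal.Quotient.mk 𝔞 x.1)
          rfl) }
    let s : ((I ⊓ 𝔞 : Ideal R')) →ₗ[R'] I := Submodule.inclusion inf_le_left
    have hst : Function.Exact s t := by
      intro y
      constructor
      · intro h
        have hy𝔞 : (y : R') ∈ 𝔞 :=
          Ideal.Quotient.eq_zero_iff_mem.mp (congrArg Subtype.val h)
        exact ⟨⟨y.1, ⟨y.2, hy𝔞⟩⟩, rfl⟩
      · rintro ⟨w, rfl⟩
        exact Subtype.ext (Ideal.Quotient.eq_zero_iff_mem.mpr w.2.2)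
    have hts : Function.Surjective t := by
      rintro ⟨y, hy⟩
      obtain ⟨x, hxI, rfl⟩ := (Ideal.mem_map_iff_of_surjective _
        Ideal.Quotient.mk_surjective).mp hy
      exact ⟨⟨x, hxI⟩, rfl⟩
    have hex := rTensor_exact (Q := E) hst hts
    obtain ⟨θ1, hθ1, hbij1⟩ := theta_bijective 𝔞 π hπ hKJ Ibar
    have hwinj : Function.Injective (LinearMap.rTensor A Ibar.subtype) :=
      (Module.Flat.iff_rTensor_injective' (R := R' ⧸ 𝔞) (M := A)).mp inferInstance Ibar
    have hcomm1 : ∀ y : I ⊗[R'] E,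
        llidA (LinearMap.rTensor A Ibar.subtype (θ1 (LinearMap.rTensor E t y))) =
        π (llid (LinearMap.rTensor E I.subtype y)) := by
      intro y
      induction y using TensorProduct.induction_on with
      | zero =>
        rw [(LinearMap.rTensor E t).map_zero, θ1.map_zero,
          (LinearMap.rTensor A Ibar.subtype).map_zero, llidA.map_zero,
          (LinearMap.rTensor E I.subtype).map_zero, llid.map_zero, map_zero]
      | tmul w e =>
        have h1 : LinearMap.rTensor E t (w ⊗ₜ e) = (t w) ⊗ₜ e := rfl
        rw [h1, hθ1]
        have h2 : LinearMap.rTensor A Ibar.subtype ((t w) ⊗ₜ π e) =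
            (Ideal.Quotient.mk 𝔞 w.1) ⊗ₜ π e := rfl
        have h3 : LinearMap.rTensor E I.subtype (w ⊗ₜ e) = (w : R') ⊗ₜ e := rfl
        rw [h2, h3, hllidA_tmul, hllid_tmul, map_smul, ← Ideal.Quotient.algebraMap_eq,
          algebraMap_smul]
      | add a b ha hb =>
        rw [(LinearMap.rTensor E t).map_add, θ1.map_add,
          (LinearMap.rTensor A Ibar.subtype).map_add, llidA.map_add,
          (LinearMap.rTensor E I.subtype).map_add, llid.map_add, map_add, ha, hb]
    have h1 : LinearMap.rTensor E t x = 0 := by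
      have hc := hcomm1 x
      rw [hx, llid.map_zero, map_zero] at hc
      have h2 : LinearMap.rTensor A Ibar.subtype (θ1 (LinearMap.rTensor E t x)) = 0 :=
        hllidA_inj (by rw [hc, llidA.map_zero])
      have h3 : θ1 (LinearMap.rTensor E t x) = 0 :=
        hwinj (by rw [h2, (LinearMap.rTensor A Ibar.subtype).map_zero])
      exact hbij1.1 (by rw [h3, θ1.map_zero])
    obtain ⟨y, hy⟩ := (hex x).mp h1
    letI instN2 : Module (R' ⧸ 𝔞) ((I ⊓ 𝔞 : Ideal R')) :=
      Module.IsTorsionBySet.module (I := 𝔞)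
        (fun x a => Subtype.ext (by simpa [smul_eq_mul] using hsq𝔞 a.1 a.2 x.1 x.2.2))
    letI instTow2 : IsScalarTower R' (R' ⧸ 𝔞) ((I ⊓ 𝔞 : Ideal R')) :=
      aux_tower' 𝔞 (fun r x => rfl)
    obtain ⟨θ2, hθ2, hbij2⟩ := theta_bijective 𝔞 π hπ hKJ ((I ⊓ 𝔞 : Ideal R'))
    let incl : ((I ⊓ 𝔞 : Ideal R')) →ₗ[R' ⧸ 𝔞] 𝔞 :=
      { toFun := fun w => ⟨w.1, w.2.2⟩
        map_add' := fun w w' => rfl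
        map_smul' := by
          intro r w
          obtain ⟨r', rfl⟩ := Ideal.Quotient.mk_surjective r
          rfl }
    have hincl : Function.Injective incl := by
      intro w w' h
      have h' : ((incl w : 𝔞) : R') = ((incl w' : 𝔞) : R') := by rw [h]
      exact Subtype.ext h' 
    have hinclT : Function.Injective (LinearMap.rTensor A incl) :=
      Module.Flat.rTensor_preserves_injective_linearMap incl hincl
    have hcomm2 : ∀ v : ((I ⊓ 𝔞 : Ideal R')) ⊗[R'] E,
        (μ (lcomm (LinearMap.rTensor A incl (θ2 v))) : E) =
        llid (LinearMap.rTensor E I.subtype (LinearMap.rTensor E s v)) := by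
      intro v
      induction v using TensorProduct.induction_on with
      | zero =>
        rw [θ2.map_zero, (LinearMap.rTensor A incl).map_zero, lcomm.map_zero, μ.map_zero,
          (LinearMap.rTensor E s).map_zero, (LinearMap.rTensor E I.subtype).map_zero,
          llid.map_zero, ZeroMemClass.coe_zero]
      | tmul w e =>
        rw [hθ2]
        have ha : LinearMap.rTensor A incl ((w ⊗ₜ π e :
            ((I ⊓ 𝔞 : Ideal R')) ⊗[R' ⧸ 𝔞] A)) = (incl w) ⊗ₜ π e := rfl
        have hc : LinearMap.rTensor E I.subtype (LinearMap.rTensor E s (w ⊗ₜ e)) =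
            (w : R') ⊗ₜ e := rfl
        rw [ha, hlcomm_tmul, hc, hμ, hllid_tmul, Algebra.smul_def]
        rfl
      | add a b ha hb =>
        rw [θ2.map_add, (LinearMap.rTensor A incl).map_add, lcomm.map_add, μ.map_add,
          (LinearMap.rTensor E s).map_add, (LinearMap.rTensor E I.subtype).map_add,
          llid.map_add, Submodule.coe_add, ha, hb]
    have h2 : (μ (lcomm (LinearMap.rTensor A incl (θ2 y))) : E) = 0 := by
      rw [hcomm2 y, hy, hx, llid.map_zero]
    have h3 : μ (lcomm (LinearMap.rTensor A incl (θ2 y))) = 0 := Subtype.ext h2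
    have h4 : lcomm (LinearMap.rTensor A incl (θ2 y)) = 0 :=
      hμbij.1 (by rw [h3, μ.map_zero])
    have h5 : LinearMap.rTensor A incl (θ2 y) = 0 :=
      hlcomm_bij.1 (by rw [h4, lcomm.map_zero])
    have h6 : θ2 y = 0 := hinclT (by rw [h5, (LinearMap.rTensor A incl).map_zero])
    have h7 : y = 0 := hbij2.1 (by rw [h6, θ2.map_zero])
    rw [← hy, h7, (LinearMap.rTensor E s).map_zero]
end
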